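/- arXiv:2503.18555 — 4 statements merged into one kernel-verified Lean document; each statement's English description precedes it below -/
import Mathlib

section
/- Let S be a finite set of points in a metric space with all pairwise distances distinct, and let f be the nearest-neighbor map. Then every directed cycle in the functional graph of f has length exactly 2. -/
/-- In a finite set `S` with all pairwise distances distinct, every directed cycle of the
nearest-neighbor map `f` has length exactly `2`. -/
theorem nearest_neighbor_cycles_length_two {X : Type*} [MetricSpace X] (S : Set X)
    (hfin : S.Finite) (hcard : 2 ≤ S.ncard)
    (hdd : ∀ a b c e, a ∈ S → b ∈ S → c ∈ S → e ∈ S → a ≠ b → c ≠ e →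
      ({a, b} : Set X) ≠ {c, e} → dist a b ≠ dist c e)
    (f : X → X)
    (hf : ∀ x ∈ S, f x ∈ S ∧ f x ≠ x ∧ ∀ z ∈ S, z ≠ x → dist x (f x) ≤ dist x z)
    (k : ℕ) (hk : 1 ≤ k) (x : ℕ → X)
    (hmem : ∀ i, i < k → x i ∈ S)
    (hstep : ∀ i, i < k → f (x i) = x (i + 1))
    (hclose : x k = x 0)
    (hinj : ∀ i j, i < k → j < k → x i = x j → i = j) :
    k = 2 := by
  by_contra hne
  -- rule out k = 1
  have hk1 : k ≠ 1 := by
    intro h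
    subst h
    have h0 := hf (x 0) (hmem 0 (by norm_num))
    have hs := hstep 0 (by norm_num)
    rw [hclose] at hs
    exact h0.2.1 hs
  have hk3 : 3 ≤ k := by omega
  -- membership up to k
  have hmem' : ∀ i, i ≤ k → x i ∈ S := by
    intro i hi
    rcases eq_or_lt_of_le hi with h | h
    · rw [h, hclose]; exact hmem 0 (by omega)
    · exact hmem i h
  -- x i ≠ x (i+1) for i < k
  have hne' : ∀ i, i < k → x i ≠ x (i + 1) := by
    intro i hi heq
    have h0 := hf (x i) (hmem i hi)
    rw [hstep i hi] at h0
    exact h0.2.1 heq.symm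
  -- strict decrease of consecutive distances
  have hlt : ∀ i, i + 1 < k →
      dist (x (i + 1)) (x (i + 2)) < dist (x i) (x (i + 1)) := by
    intro i hi
    have hik : i < k := by omega
    have h1 := hf (x (i + 1)) (hmem (i + 1) hi)
    rw [hstep (i + 1) hi] at h1
    have hle : dist (x (i + 1)) (x (i + 2)) ≤ dist (x i) (x (i + 1)) := by
      have := h1.2.2 (x i) (hmem i hik) (fun h => hne' i hik h)
      rwa [dist_comm (x (i+1)) (x i)] at this
    rcases lt_or_eq_of_le hle with h | h
    · exact h
    · exfalso
      -- equal distances force equal pairs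
      have hne2 : x (i + 1) ≠ x (i + 2) := fun h => h1.2.1 h.symm
      have hmem2 : x (i + 2) ∈ S := hmem' (i + 2) (by omega)
      have hsets : ({x (i + 1), x (i + 2)} : Set X) = {x i, x (i + 1)} := by
        by_contra hss
        exact hdd (x (i + 1)) (x (i + 2)) (x i) (x (i + 1))
          (hmem (i + 1) hi) hmem2 (hmem i hik) (hmem (i + 1) hi)
          hne2 (hne' i hik) hss h
      have hx2 : x (i + 2) = x i := by
        have : x (i + 2) ∈ ({x i, x (i + 1)} : Set X) := by
          rw [← hsets]; exact Set.mem_insert_of_mem _ rfl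
        rcases this with h' | h'
        · exact h'
        · exact absurd h'.symm hne2
      rcases lt_or_eq_of_le (show i + 2 ≤ k by omega) with hc | hc
      · have := hinj (i + 2) i hc hik hx2
        omega
      · rw [hc, hclose] at hx2
        have := hinj i 0 hik (by omega) hx2.symm
        omega
  -- chain: for 1 ≤ j < k, d j < d 0
  have hchain : ∀ j, 1 ≤ j → j < k →
      dist (x j) (x (j + 1)) < dist (x 0) (x 1) := by
    intro j
    induction j with
    | zero => omega
    | succ n ih =>
      intro _ hjk
      rcases Nat.eq_or_lt_of_le (show 1 ≤ n + 1 from by omega) with h | h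
      · have := hlt 0 (by omega)
        simpa [← h] using this
      · have hn1 : 1 ≤ n := by omega
        have := hlt n hjk
        calc dist (x (n + 1)) (x (n + 1 + 1)) < dist (x n) (x (n + 1)) := this
          _ < dist (x 0) (x 1) := ih hn1 (by omega)
  -- wrap around
  have hk1lt : k - 1 < k := by omega
  have hne0 : x (k - 1) ≠ x 0 := by
    intro h
    have := hinj (k - 1) 0 hk1lt (by omega) h
    omega
  have h0 := hf (x 0) (hmem 0 (by omega))
  rw [hstep 0 (by omega)] at h0
  have hle0 : dist (x 0) (x 1) ≤ dist (x 0) (x (k - 1)) :=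
    h0.2.2 (x (k - 1)) (hmem (k - 1) hk1lt) hne0
  have hlast := hchain (k - 1) (by omega) hk1lt
  rw [show k - 1 + 1 = k by omega, hclose, dist_comm] at hlast
  exact absurd (lt_of_le_of_lt hle0 hlast) (lt_irrefl _)
end

section
/- For every x in the closed ball B_R(0) ⊆ ℝ^d and every n ∈ ℕ, the integral over y ∈ B_R(x) of (max(‖x‖, ‖y − x‖))^{nd} dy equals (ω_d/(n+1)) (R^{(n+1)d} + n‖x‖^{(n+1)d}), where ω_d is the volume of the unit ball in ℝ^d. -/
/-!
The integrand depends on `y` only through `r = ‖y - x‖`, so polar coordinates turn the integral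
into `d ω_d ∫₀ᴿ r^(d-1) max(‖x‖, r)^(nd) dr`. Since `‖x‖ ≤ R`, splitting at `r = ‖x‖` leaves two
monomial integrals, `‖x‖^(nd) ∫₀^‖x‖ r^(d-1) dr` and `∫_‖x‖ᴿ r^((n+1)d-1) dr`.
-/

open MeasureTheory Metric Set Module

section

variable {E F : Type*} [NormedAddCommGroup E] [NormedSpace ℝ E] [Nontrivial E]
  [FiniteDimensional ℝ E] [MeasurableSpace E] [BorelSpace E] [NormedAddCommGroup F]
  [NormedSpace ℝ F] (μ : Measure E) [μ.IsAddHaarMeasure]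

theorem setIntegral_ball_fun_norm_sub_addHaar (g : ℝ → F) (x : E) {R : ℝ} (hR : 0 ≤ R) :
    ∫ y in ball x R, g ‖y - x‖ ∂μ =
      finrank ℝ E • μ.real (ball 0 1) • ∫ r in (0)..R, r ^ (finrank ℝ E - 1) • g r := by
  have h_indicator : ∫ y in ball x R, g ‖y - x‖ ∂μ = ∫ y, (Iio R).indicator g ‖y - x‖ ∂μ := by
    rw [← integral_indicator measurableSet_ball]
    congr 1 with y
    simp [indicator, dist_eq_norm]
  have h_radial : ∫ r in Ioi 0, r ^ (finrank ℝ E - 1) • (Iio R).indicator g r =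
      ∫ r in (0)..R, r ^ (finrank ℝ E - 1) • g r := by
    rw [intervalIntegral.integral_of_le hR, integral_Ioc_eq_integral_Ioo,
      ← integral_indicator measurableSet_Ioo, ← integral_indicator measurableSet_Ioi]
    congr 1 with r
    by_cases h0 : 0 < r <;> by_cases hr : r < R <;> simp [indicator, h0, hr]
  rw [h_indicator, integral_sub_right_eq_self (fun y ↦ (Iio R).indicator g ‖y‖) x,
    integral_fun_norm_addHaar, h_radial]

end

theorem integral_pow_mul_max_pow (k m : ℕ) {a R : ℝ} (ha : 0 ≤ a) (haR : a ≤ R) :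
    ∫ r in (0)..R, r ^ k * max a r ^ m =
      a ^ (m + k + 1) / (k + 1) + (R ^ (m + k + 1) - a ^ (m + k + 1)) / (m + k + 1) := by
  have h_cont : Continuous fun r : ℝ ↦ r ^ k * max a r ^ m := by fun_prop
  have h_below : ∫ r in (0)..a, r ^ k * max a r ^ m = a ^ (m + k + 1) / (k + 1) := by
    rw [intervalIntegral.integral_congr (g := fun r ↦ a ^ m * r ^ k),
      intervalIntegral.integral_const_mul, integral_pow]
    · simp only [pow_add, pow_one, mul_zero, sub_zero]
      ring
    · intro r hr
      rw [uIcc_of_le ha] at hr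
      simp [max_eq_left hr.2, mul_comm]
  have h_above : ∫ r in a..R, r ^ k * max a r ^ m =
      (R ^ (m + k + 1) - a ^ (m + k + 1)) / (m + k + 1) := by
    rw [intervalIntegral.integral_congr (g := fun r ↦ r ^ (m + k)), integral_pow]
    · push_cast; rfl
    · intro r hr
      rw [uIcc_of_le haR] at hr
      simp [max_eq_right hr.1, pow_add, mul_comm]
  rw [← intervalIntegral.integral_add_adjacent_intervals (h_cont.intervalIntegrable 0 a)
    (h_cont.intervalIntegrable a R), h_below, h_above]

/-- For `x` in the closed ball `B_R(0) ⊆ ℝ^d` and `n ∈ ℕ`,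
`∫_{B_R(x)} (max(‖x‖, ‖y - x‖))^{nd} dy = (ω_d/(n+1)) (R^{(n+1)d} + n ‖x‖^{(n+1)d})`. -/
theorem integral_max_norm_pow_ball (d : ℕ) (hd : 1 ≤ d) (R : ℝ) (hR : 0 < R) (n : ℕ)
    (x : EuclideanSpace ℝ (Fin d)) (hx : x ∈ Metric.closedBall (0 : EuclideanSpace ℝ (Fin d)) R) :
    ∫ y in Metric.ball x R, (max ‖x‖ ‖y - x‖) ^ (n * d) =
      (volume (Metric.ball (0 : EuclideanSpace ℝ (Fin d)) 1)).toReal / (n + 1)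
        * (R ^ ((n + 1) * d) + n * ‖x‖ ^ ((n + 1) * d)) := by
  have hxR : ‖x‖ ≤ R := by simpa using hx
  obtain ⟨k, rfl⟩ : ∃ k, d = k + 1 := ⟨d - 1, by omega⟩
  have h_exp : n * (k + 1) + k + 1 = (n + 1) * (k + 1) := by ring
  rw [setIntegral_ball_fun_norm_sub_addHaar volume (fun r ↦ max ‖x‖ r ^ (n * (k + 1))) x hR.le,
    finrank_euclideanSpace_fin, Nat.add_sub_cancel]
  simp only [smul_eq_mul, nsmul_eq_mul]
  rw [integral_pow_mul_max_pow k _ (norm_nonneg x) hxR, h_exp]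
  simp only [measureReal_def]
  push_cast
  field_simp
  ring
end

section
/- Let Φ be a homogeneous Poisson point process on ℝ^d with intensity λ. Then almost surely Φ contains no infinite descending chain, i.e., no infinite sequence of distinct points x_0, x_1, x_2, ... of Φ with d(x_{i+1}, x_{i+2}) < d(x_i, x_{i+1}) for all i. -/
open MeasureTheory

/-- `Φ` is a homogeneous Poisson point process of intensity `lam` on `ℝ^d`:
it is a.s. locally finite, counts in bounded Borel sets are Poisson distributed with
mean `lam · vol`, and counts in pairwise disjoint Borel sets are independent. -/
def IsPoissonPP (d : ℕ) (lam : ℝ) {Ω : Type*} [MeasurableSpace Ω] (P : Measure Ω)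
    (Φ : Ω → Set (EuclideanSpace ℝ (Fin d))) : Prop :=
  (∀ ω, ∀ A : Set (EuclideanSpace ℝ (Fin d)), Bornology.IsBounded A → (Φ ω ∩ A).Finite) ∧
  (∀ A : Set (EuclideanSpace ℝ (Fin d)), MeasurableSet A → volume A < ⊤ → ∀ k : ℕ,
    P {ω | (Φ ω ∩ A).ncard = k} =
      ENNReal.ofReal (Real.exp (-(lam * (volume A).toReal))
        * (lam * (volume A).toReal) ^ k / (Nat.factorial k : ℝ))) ∧
  (∀ (n : ℕ) (A : Fin n → Set (EuclideanSpace ℝ (Fin d))),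
    (∀ i, MeasurableSet (A i)) → Pairwise (Function.onFun Disjoint A) →
    ProbabilityTheory.iIndepFun
      (fun i ω => (Φ ω ∩ A i).ncard) P)

/-!
Along a descending chain the step lengths decrease to some `c ≥ 0`, so a tail of the chain is an
arbitrarily long injective path in `Φ`, starting in a fixed ball, all of whose steps have length
in `[a, b]`, where `a ≤ c < b` are rationals with `λ · vol {a ≤ ‖x‖ ≤ b} < 1`. For fixed `a`, `b`
and starting ball, the probability that such an `n`-step path exists decays geometrically in `n`.
Indeed, cut space into cubes of side `δ`: the cubes visited by the path start in a fixed finite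
set and move by lattice vectors from a set `F₁` with `#F₁ · δ^d ≤ vol {a - 3δ√d ≤ ‖x‖ ≤ b + 3δ√d}`,
and by independence and the Poisson tail bound `P(N(A) ≥ k) ≤ (λ |A|)^k` a given sequence of
`n + 1` cubes is visited with probability at most `(λ δ^d)^(n+1)`. This bounds the probability by
a constant times `(#F₁ · λ δ^d)^n`, with ratio `< 1` for small `δ`. A countable union over
`(a, b, m)` ends the proof.
-/

open Metric Set Function ENNReal Topology

noncomputable section

namespace PoissonNoDescendingChain

lemma firstAndSteps_injective {G : Type*} [AddGroup G] {n : ℕ} :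
    Injective fun z : Fin (n + 1) → G => (z 0, fun k : Fin n => z k.succ - z k.castSucc) := by
  intro z z' h
  simp only [Prod.mk.injEq, funext_iff] at h
  funext i
  induction i using Fin.induction with
  | zero => exact h.1
  | succ k ih => simpa [ih] using h.2 k

lemma tsum_poisson_tail_le {μ : ℝ} (hμ : 0 ≤ μ) (k : ℕ) :
    ∑' i, ENNReal.ofReal (Real.exp (-μ) * μ ^ (k + i) / (k + i).factorial) ≤
      ENNReal.ofReal (μ ^ k) := by
  have hsum := ProbabilityTheory.hasSum_one_poissonMeasure μ.toNNReal
  rw [Real.coe_toNNReal _ hμ] at hsum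
  calc ∑' i, ENNReal.ofReal (Real.exp (-μ) * μ ^ (k + i) / (k + i).factorial)
      ≤ ∑' i, ENNReal.ofReal (μ ^ k) * ENNReal.ofReal (Real.exp (-μ) * μ ^ i / i.factorial) := by
        refine ENNReal.tsum_le_tsum fun i => ?_
        rw [← ENNReal.ofReal_mul (by positivity), pow_add, mul_left_comm, ← mul_div_assoc]
        gcongr
        exact Nat.le_add_left i k
    _ = ENNReal.ofReal (μ ^ k) := by
        rw [ENNReal.tsum_mul_left, ← ENNReal.ofReal_tsum_of_nonneg (fun i => by positivity)
          hsum.summable, hsum.tsum_eq, ENNReal.ofReal_one, mul_one]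

lemma eq_zero_of_le_mul_pow {x K r : ℝ≥0∞} (hK : K ≠ ⊤) (hr : r < 1)
    (h : ∀ n : ℕ, x ≤ K * r ^ n) : x = 0 := by
  have := ENNReal.Tendsto.const_mul (ENNReal.tendsto_pow_atTop_nhds_zero_of_lt_one hr) (.inr hK)
  rw [mul_zero] at this
  exact nonpos_iff_eq_zero.1 (ge_of_tendsto' this h)

lemma addHaar_closedBall_sdiff_ball {E : Type*} [NormedAddCommGroup E] [NormedSpace ℝ E]
    [MeasurableSpace E] [BorelSpace E] [FiniteDimensional ℝ E] [Nontrivial E] (μ : Measure E)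
    [μ.IsAddHaarMeasure] (x : E) {r R : ℝ} (hr : 0 ≤ r) (hrR : r ≤ R) :
    μ (closedBall x R \ ball x r) =
      ENNReal.ofReal (R ^ Module.finrank ℝ E - r ^ Module.finrank ℝ E) * μ (ball 0 1) := by
  rw [measure_sdiff (ball_subset_closedBall.trans (closedBall_subset_closedBall hrR))
      measurableSet_ball.nullMeasurableSet measure_ball_lt_top.ne,
    Measure.addHaar_closedBall μ x (hr.trans hrR), Measure.addHaar_ball μ x hr,
    ← ENNReal.sub_mul fun _ _ => measure_ball_lt_top.ne, ENNReal.ofReal_sub _ (by positivity)]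

lemma exists_rat_btwn_pow_sub_lt {c ε : ℝ} (hc : 0 ≤ c) (hε : 0 < ε) (d : ℕ) :
    ∃ a b : ℚ, 0 ≤ a ∧ (a : ℝ) ≤ c ∧ c < b ∧ (b : ℝ) ^ d - (a : ℝ) ^ d < ε := by
  obtain ⟨η, hη, hpow⟩ :=
    Metric.continuousAt_iff.1 ((continuous_pow d).continuousAt (x := c)) (ε / 2) (half_pos hε)
  obtain ⟨a, ha₁, ha₂⟩ := exists_rat_btwn (sub_lt_self c hη)
  obtain ⟨b, hb₁, hb₂⟩ := exists_rat_btwn (lt_add_of_pos_right c hη)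
  have hac : ((max a 0 : ℚ) : ℝ) ≤ c := by push_cast; exact max_le ha₂.le hc
  have h₁ := hpow (x := ((max a 0 : ℚ) : ℝ)) <| by
    rw [Real.dist_eq, abs_lt]; push_cast at hac ⊢; constructor <;> linarith [le_max_left (a : ℝ) 0]
  have h₂ := hpow (x := (b : ℝ)) <| by rw [Real.dist_eq, abs_lt]; constructor <;> linarith
  rw [Real.dist_eq, abs_lt] at h₁ h₂
  exact ⟨max a 0, b, le_max_right a 0, hac, hb₁, by linarith⟩

section Grid

variable {d : ℕ} {δ : ℝ}

def gridOf (δ : ℝ) (x : EuclideanSpace ℝ (Fin d)) : Fin d → ℤ := fun j => ⌊x j / δ⌋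

def corner (δ : ℝ) (u : Fin d → ℤ) : EuclideanSpace ℝ (Fin d) := WithLp.toLp 2 fun j => u j * δ

def cube (δ : ℝ) (u : Fin d → ℤ) : Set (EuclideanSpace ℝ (Fin d)) := {x | gridOf δ x = u}

lemma corner_sub (u v : Fin d → ℤ) : corner δ (u - v) = corner δ u - corner δ v := by
  ext j
  simp [corner, sub_mul]

lemma pairwise_disjoint_cube : Pairwise (Disjoint on cube (d := d) δ) :=
  fun _ _ huv => disjoint_left.2 fun _ hu hv => huv (hu.symm.trans hv)

lemma mem_cube_iff (hδ : 0 < δ) {u : Fin d → ℤ} {x : EuclideanSpace ℝ (Fin d)} :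
    x ∈ cube δ u ↔ ∀ j, x j ∈ Ico (u j * δ) (u j * δ + δ) := by
  simp only [cube, mem_ofPred_eq, funext_iff, gridOf, Int.floor_eq_iff, le_div_iff₀ hδ,
    div_lt_iff₀ hδ, add_mul, one_mul, mem_Ico]

lemma cube_eq_preimage_pi (hδ : 0 < δ) (u : Fin d → ℤ) :
    cube δ u = (MeasurableEquiv.toLp 2 (Fin d → ℝ)).symm ⁻¹'
      univ.pi fun j => Ico (u j * δ) (u j * δ + δ) := by
  ext x
  simp only [mem_preimage, mem_univ_pi]
  exact mem_cube_iff hδ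

lemma measurableSet_cube (hδ : 0 < δ) (u : Fin d → ℤ) : MeasurableSet (cube δ u) := by
  rw [cube_eq_preimage_pi hδ]
  exact MeasurableEquiv.measurableSet_preimage _ |>.2 (.univ_pi fun _ => measurableSet_Ico)

lemma volume_cube (hδ : 0 < δ) (u : Fin d → ℤ) : volume (cube δ u) = ENNReal.ofReal (δ ^ d) := by
  rw [cube_eq_preimage_pi hδ,
    (EuclideanSpace.volume_preserving_symm_measurableEquiv_toLp _).measure_preimage
      (MeasurableSet.univ_pi fun _ => measurableSet_Ico).nullMeasurableSet, volume_pi_pi]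
  simp [Real.volume_Ico, ENNReal.ofReal_pow hδ.le]

lemma dist_corner_gridOf_le (hδ : 0 < δ) (x : EuclideanSpace ℝ (Fin d)) :
    dist x (corner δ (gridOf δ x)) ≤ δ * √d := by
  have hx : x ∈ cube δ (gridOf δ x) := rfl
  rw [mem_cube_iff hδ] at hx
  have hcoord : ∀ j, dist (x j) (corner δ (gridOf δ x) j) ^ 2 ≤ δ ^ 2 := fun j => by
    rw [Real.dist_eq, sq_abs]
    simp only [corner]
    nlinarith [(hx j).1, (hx j).2]
  calc dist x (corner δ (gridOf δ x)) ≤ √(∑ _j : Fin d, δ ^ 2) := by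
        rw [EuclideanSpace.dist_eq]
        exact Real.sqrt_le_sqrt (Finset.sum_le_sum fun j _ => hcoord j)
    _ = δ * √d := by
        simp [Real.sqrt_sq hδ.le, mul_comm]

lemma isBounded_cube (hδ : 0 < δ) (u : Fin d → ℤ) : Bornology.IsBounded (cube δ u) :=
  isBounded_closedBall.subset fun x (hx : gridOf δ x = u) => hx ▸ dist_corner_gridOf_le hδ x

lemma dist_le_of_gridOf_eq (hδ : 0 < δ) {x y : EuclideanSpace ℝ (Fin d)}
    (h : gridOf δ x = gridOf δ y) : dist x y ≤ 2 * (δ * √d) := by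
  have hx := dist_corner_gridOf_le hδ x
  have hy := dist_corner_gridOf_le hδ y
  rw [h] at hx
  linarith [dist_triangle_right x y (corner δ (gridOf δ y))]

lemma abs_norm_sub_dist_le (hδ : 0 < δ) {x y y' : EuclideanSpace ℝ (Fin d)}
    (hx : x ∈ cube δ (gridOf δ y' - gridOf δ y)) : |‖x‖ - dist y' y| ≤ 3 * (δ * √d) := by
  have hcx := dist_corner_gridOf_le hδ x
  rw [show gridOf δ x = _ from hx, corner_sub] at hcx
  have hcy := dist_corner_gridOf_le hδ y
  have hcy' := dist_corner_gridOf_le hδ y'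
  calc |‖x‖ - dist y' y| ≤ dist x (y' - y) := by
        rw [dist_eq_norm y', dist_eq_norm x]; exact abs_norm_sub_norm_le _ _
    _ ≤ dist x (corner δ (gridOf δ y') - corner δ (gridOf δ y)) +
        (dist (corner δ (gridOf δ y')) y' + dist (corner δ (gridOf δ y)) y) :=
        (dist_triangle _ _ _).trans (add_le_add_right (dist_sub_sub_le _ _ _ _) _)
    _ ≤ 3 * (δ * √d) := by rw [dist_comm _ y', dist_comm _ y]; linarith

lemma card_mul_volume_cube_le_volume (hδ : 0 < δ) {W : Set (EuclideanSpace ℝ (Fin d))}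
    {F : Finset (Fin d → ℤ)} (hF : ∀ u ∈ F, cube δ u ⊆ W) :
    F.card * ENNReal.ofReal (δ ^ d) ≤ volume W :=
  calc F.card * ENNReal.ofReal (δ ^ d) = volume (⋃ u ∈ F, cube δ u) := by
        rw [measure_biUnion_finset (pairwise_disjoint_cube.set_pairwise _)
          fun u _ => measurableSet_cube hδ u]
        simp [volume_cube hδ]
    _ ≤ volume W := measure_mono (iUnion₂_subset hF)

lemma finite_setOf_cube_subset (hδ : 0 < δ) {W : Set (EuclideanSpace ℝ (Fin d))}
    (hW : volume W ≠ ⊤) : {u | cube δ u ⊆ W}.Finite := by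
  by_contra hinf
  have hcube : ENNReal.ofReal (δ ^ d) ≠ 0 := by positivity
  obtain ⟨n, hn⟩ := ENNReal.exists_nat_gt (ENNReal.div_lt_top hW hcube).ne
  obtain ⟨F, hFW, rfl⟩ := Set.Infinite.exists_subset_card_eq hinf n
  have := card_mul_volume_cube_le_volume hδ fun u hu => hFW hu
  rw [ENNReal.div_lt_iff (.inl hcube) (.inl ofReal_ne_top)] at hn
  exact hn.not_ge this

end Grid

variable {d : ℕ} {Ω : Type*}

def pathEvent (Φ : Ω → Set (EuclideanSpace ℝ (Fin d))) (a b m : ℝ) (n : ℕ) : Set Ω :=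
  {ω | ∃ y : Fin (n + 1) → EuclideanSpace ℝ (Fin d), Injective y ∧ (∀ i, y i ∈ Φ ω) ∧
    ‖y 0‖ ≤ m ∧ ∀ k : Fin n, dist (y k.castSucc) (y k.succ) ∈ Icc a b}

def gridPathEvent (Φ : Ω → Set (EuclideanSpace ℝ (Fin d))) (δ : ℝ) (F₀ F₁ : Finset (Fin d → ℤ))
    (n : ℕ) : Set Ω :=
  {ω | ∃ y : Fin (n + 1) → EuclideanSpace ℝ (Fin d), Injective y ∧ (∀ i, y i ∈ Φ ω) ∧
    gridOf δ (y 0) ∈ F₀ ∧ ∀ k : Fin n, gridOf δ (y k.succ) - gridOf δ (y k.castSucc) ∈ F₁}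

lemma pathEvent_subset_gridPathEvent {Φ : Ω → Set (EuclideanSpace ℝ (Fin d))} {a b m δ : ℝ}
    (hδ : 0 < δ) {F₀ F₁ : Finset (Fin d → ℤ)}
    (hF₀ : ∀ u, cube δ u ⊆ closedBall 0 (m + 2 * (δ * √d)) → u ∈ F₀)
    (hF₁ : ∀ u, cube δ u ⊆ closedBall 0 (b + 3 * (δ * √d)) \ ball 0 (max (a - 3 * (δ * √d)) 0) →
      u ∈ F₁) (n : ℕ) :
    pathEvent Φ a b m n ⊆ gridPathEvent Φ δ F₀ F₁ n := by
  rintro ω ⟨y, hy, hyΦ, hy0, hsteps⟩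
  refine ⟨y, hy, hyΦ, hF₀ _ fun x hx => ?_, fun k => hF₁ _ fun x hx => ?_⟩
  · have := dist_le_of_gridOf_eq hδ hx
    rw [mem_closedBall, dist_zero_right]
    linarith [norm_le_norm_add_norm_sub' x (y 0), dist_eq_norm x (y 0)]
  · have hx' := abs_le.1 (abs_norm_sub_dist_le hδ hx)
    have hk := hsteps k
    rw [mem_Icc, dist_comm] at hk
    simp only [mem_sdiff, mem_closedBall, dist_zero_right, mem_ball, not_lt, max_le_iff]
    exact ⟨by linarith, by linarith, norm_nonneg x⟩

lemma exists_forall_mem_pathEvent_of_dist_lt {Φ : Ω → Set (EuclideanSpace ℝ (Fin d))} {ω : Ω}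
    {x : ℕ → EuclideanSpace ℝ (Fin d)} (hxΦ : ∀ i, x i ∈ Φ ω) (hx : Injective x)
    (hdesc : ∀ i, dist (x (i + 1)) (x (i + 2)) < dist (x i) (x (i + 1))) :
    ∃ c ≥ 0, ∀ a b : ℝ, a ≤ c → c < b → ∃ m : ℕ, ∀ n, ω ∈ pathEvent Φ a b m n := by
  have hbdd : BddBelow (range fun i => dist (x i) (x (i + 1))) := ⟨0, by simp [lowerBounds]⟩
  have hlim := tendsto_atTop_ciInf
    (antitone_nat_of_succ_le (f := fun i => dist (x i) (x (i + 1))) fun i => (hdesc i).le) hbdd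
  refine ⟨⨅ i, dist (x i) (x (i + 1)), le_ciInf fun i => dist_nonneg, fun a b hac hcb => ?_⟩
  obtain ⟨N, hN⟩ := Filter.eventually_atTop.1 (hlim.eventually (gt_mem_nhds hcb))
  refine ⟨⌈‖x N‖⌉₊, fun n => ⟨fun i => x (N + i), ?_, fun i => hxΦ _, Nat.le_ceil _, fun k => ?_⟩⟩
  · exact hx.comp fun i j h => Fin.ext (by simpa using h)
  · exact ⟨hac.trans (ciInf_le hbdd _), (hN _ (Nat.le_add_right N k)).le⟩

end PoissonNoDescendingChain

end

open PoissonNoDescendingChain Finset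

namespace IsPoissonPP

variable {d : ℕ} {lam : ℝ} {Ω : Type*} [MeasurableSpace Ω] {P : Measure Ω}
  {Φ : Ω → Set (EuclideanSpace ℝ (Fin d))}

lemma measure_le_ncard_le (hΦ : IsPoissonPP d lam P Φ) (hlam : 0 ≤ lam)
    {A : Set (EuclideanSpace ℝ (Fin d))} (hA : MeasurableSet A) (hAvol : volume A ≠ ⊤) (k : ℕ) :
    P {ω | k ≤ (Φ ω ∩ A).ncard} ≤ ENNReal.ofReal ((lam * (volume A).toReal) ^ k) :=
  calc P {ω | k ≤ (Φ ω ∩ A).ncard}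
      ≤ P (⋃ i, {ω | (Φ ω ∩ A).ncard = k + i}) :=
        measure_mono fun ω hω => mem_iUnion.2 ⟨_, (Nat.add_sub_cancel' hω).symm⟩
    _ ≤ ∑' i, P {ω | (Φ ω ∩ A).ncard = k + i} := measure_iUnion_le _
    _ = ∑' i, ENNReal.ofReal (Real.exp (-(lam * (volume A).toReal)) *
          (lam * (volume A).toReal) ^ (k + i) / (k + i).factorial) := by
        simp_rw [hΦ.2.1 A hA hAvol.lt_top]
    _ ≤ _ := tsum_poisson_tail_le (by positivity) k

lemma iIndepFun_ncard {ι : Type*} [Fintype ι] (hΦ : IsPoissonPP d lam P Φ)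
    {A : ι → Set (EuclideanSpace ℝ (Fin d))} (hA : ∀ i, MeasurableSet (A i))
    (hdisj : Pairwise (Disjoint on A)) :
    ProbabilityTheory.iIndepFun (fun i ω => (Φ ω ∩ A i).ncard) P := by
  let e := Fintype.equivFin ι
  have := (hΦ.2.2 _ (A ∘ e.symm) (fun _ => hA _)
    (hdisj.comp_of_injective e.symm.injective)).precomp e.injective
  simpa using this

lemma measure_forall_le_ncard_le {ι : Type*} [Fintype ι] (hΦ : IsPoissonPP d lam P Φ)
    (hlam : 0 ≤ lam) {A : ι → Set (EuclideanSpace ℝ (Fin d))} (hA : ∀ i, MeasurableSet (A i))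
    (hAvol : ∀ i, volume (A i) ≠ ⊤) (hdisj : Pairwise (Disjoint on A)) (j : ι → ℕ) :
    P {ω | ∀ i, j i ≤ (Φ ω ∩ A i).ncard} ≤
      ∏ i, ENNReal.ofReal ((lam * (volume (A i)).toReal) ^ j i) := by
  rw [show {ω | ∀ i, j i ≤ (Φ ω ∩ A i).ncard} = ⋂ i, (fun ω => (Φ ω ∩ A i).ncard) ⁻¹' Ici (j i)
    by ext; simp, (hΦ.iIndepFun_ncard hA hdisj).meas_iInter
    fun i => ⟨Ici (j i), .of_discrete, rfl⟩]
  exact Finset.prod_le_prod' fun i _ => hΦ.measure_le_ncard_le hlam (hA i) (hAvol i) (j i)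

lemma measure_exists_injective_mem_cube_le {ι : Type*} [Fintype ι]
    (hΦ : IsPoissonPP d lam P Φ) (hlam : 0 ≤ lam) {δ : ℝ} (hδ : 0 < δ) (z : ι → Fin d → ℤ) :
    P {ω | ∃ y : ι → EuclideanSpace ℝ (Fin d), Injective y ∧ ∀ i, y i ∈ Φ ω ∩ cube δ (z i)} ≤
      ENNReal.ofReal ((lam * δ ^ d) ^ Fintype.card ι) := by
  classical
  let F := Finset.univ.image z
  let j : F → ℕ := fun w => #{i | z i = w.1}
  have hj : ∑ w, j w = Fintype.card ι := by
    rw [Finset.sum_coe_sort F fun w => #{i | z i = w}, ← Finset.card_univ,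
      ← Finset.card_eq_sum_card_fiberwise fun i _ => Finset.mem_image_of_mem z (Finset.mem_univ i)]
  calc P {ω | ∃ y : ι → EuclideanSpace ℝ (Fin d), Injective y ∧ ∀ i, y i ∈ Φ ω ∩ cube δ (z i)}
      ≤ P {ω | ∀ w : F, j w ≤ (Φ ω ∩ cube δ w.1).ncard} := by
        refine measure_mono fun ω ⟨y, hy, hyΦ⟩ w => ?_
        calc j w = (↑(Finset.image y {i | z i = w.1}) : Set (EuclideanSpace ℝ (Fin d))).ncard := by
              rw [ncard_coe_finset, Finset.card_image_of_injective _ hy]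
          _ ≤ (Φ ω ∩ cube δ w.1).ncard := by
              refine ncard_le_ncard ?_ (hΦ.1 ω _ (isBounded_cube hδ w.1))
              intro x hx
              obtain ⟨i, hi, rfl⟩ := Finset.mem_image.1 hx
              simpa [(Finset.mem_filter.1 hi).2] using hyΦ i
    _ ≤ ∏ w : F, ENNReal.ofReal ((lam * (volume (cube δ w.1)).toReal) ^ j w) :=
        hΦ.measure_forall_le_ncard_le (A := fun w : F => cube δ w.1) hlam
          (fun w => measurableSet_cube hδ w.1)
          (fun w => by simp [volume_cube hδ])
          (pairwise_disjoint_cube.comp_of_injective Subtype.val_injective) j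
    _ = ENNReal.ofReal ((lam * δ ^ d) ^ Fintype.card ι) := by
        simp_rw [volume_cube hδ, ENNReal.toReal_ofReal (by positivity : 0 ≤ δ ^ d)]
        rw [← ENNReal.ofReal_prod_of_nonneg fun _ _ => by positivity, prod_pow_eq_pow_sum, hj]

lemma measure_gridPathEvent_le (hΦ : IsPoissonPP d lam P Φ) (hlam : 0 ≤ lam) {δ : ℝ}
    (hδ : 0 < δ) (F₀ F₁ : Finset (Fin d → ℤ)) (n : ℕ) :
    P (gridPathEvent Φ δ F₀ F₁ n) ≤ #F₀ * #F₁ ^ n * ENNReal.ofReal ((lam * δ ^ d) ^ (n + 1)) := by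
  classical
  let S := (F₀ ×ˢ Fintype.piFinset fun _ : Fin n => F₁).preimage _ firstAndSteps_injective.injOn
  have hS : #S ≤ #F₀ * #F₁ ^ n := by
    refine (card_preimage _ _ _).trans_le (card_filter_le _ _) |>.trans_eq ?_
    simp [card_product, Fintype.card_piFinset]
  calc P (gridPathEvent Φ δ F₀ F₁ n)
      ≤ P (⋃ z ∈ S, {ω | ∃ y : Fin (n + 1) → EuclideanSpace ℝ (Fin d),
          Injective y ∧ ∀ i, y i ∈ Φ ω ∩ cube δ (z i)}) := by
        refine measure_mono fun ω ⟨y, hy, hyΦ, h0, hsteps⟩ => mem_iUnion₂.2 ?_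
        exact ⟨gridOf δ ∘ y, by simpa [S] using ⟨h0, hsteps⟩, y, hy, fun i => ⟨hyΦ i, rfl⟩⟩
    _ ≤ ∑ z ∈ S, P {ω | ∃ y : Fin (n + 1) → EuclideanSpace ℝ (Fin d),
          Injective y ∧ ∀ i, y i ∈ Φ ω ∩ cube δ (z i)} := measure_biUnion_finset_le _ _
    _ ≤ #S • ENNReal.ofReal ((lam * δ ^ d) ^ (n + 1)) := by
        refine sum_le_card_nsmul _ _ _ fun z _ => ?_
        simpa using hΦ.measure_exists_injective_mem_cube_le hlam hδ z
    _ ≤ #F₀ * #F₁ ^ n * ENNReal.ofReal ((lam * δ ^ d) ^ (n + 1)) := by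
        rw [nsmul_eq_mul]
        gcongr
        exact_mod_cast hS

lemma measure_forall_pathEvent_eq_zero [NeZero d] (hΦ : IsPoissonPP d lam P Φ) (hlam : 0 ≤ lam)
    {a b : ℝ} (ha : 0 ≤ a) (hab : a ≤ b)
    (hsmall : lam * (volume (ball (0 : EuclideanSpace ℝ (Fin d)) 1)).toReal * (b ^ d - a ^ d) < 1)
    (m : ℝ) : P {ω | ∀ n, ω ∈ pathEvent Φ a b m n} = 0 := by
  set v := (volume (ball (0 : EuclideanSpace ℝ (Fin d)) 1)).toReal
  obtain ⟨δ, hδ, hθ⟩ : ∃ δ > 0,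
      lam * v * ((b + 3 * (δ * √d)) ^ d - max (a - 3 * (δ * √d)) 0 ^ d) < 1 := by
    have hf : Continuous fun δ : ℝ =>
        lam * v * ((b + 3 * (δ * √d)) ^ d - max (a - 3 * (δ * √d)) 0 ^ d) := by fun_prop
    exact ((hf.tendsto 0).eventually
      (gt_mem_nhds (by simpa [max_eq_left ha] using hsmall))).exists_gt
  set R := b + 3 * (δ * √d)
  set r := max (a - 3 * (δ * √d)) 0
  have hrR : r ≤ R := by
    have := mul_nonneg hδ.le (Real.sqrt_nonneg d)
    exact max_le (by linarith) (by linarith)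
  have hfin₀ := finite_setOf_cube_subset hδ
    (measure_closedBall_lt_top (x := (0 : EuclideanSpace ℝ (Fin d))) (r := m + 2 * (δ * √d))).ne
  set W₁ : Set (EuclideanSpace ℝ (Fin d)) := closedBall 0 R \ ball 0 r
  have hfin₁ := finite_setOf_cube_subset hδ
    ((measure_mono sdiff_subset).trans_lt measure_closedBall_lt_top : volume W₁ < ⊤).ne
  have hratio : #hfin₁.toFinset * ENNReal.ofReal (lam * δ ^ d) < 1 :=
    calc #hfin₁.toFinset * ENNReal.ofReal (lam * δ ^ d)
        = ENNReal.ofReal lam * (#hfin₁.toFinset * ENNReal.ofReal (δ ^ d)) := by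
          rw [ENNReal.ofReal_mul hlam]; ring
      _ ≤ ENNReal.ofReal lam * volume W₁ := by
          gcongr
          exact card_mul_volume_cube_le_volume hδ fun u hu => hfin₁.mem_toFinset.1 hu
      _ < 1 := by
          rw [addHaar_closedBall_sdiff_ball _ _ (le_max_right _ _) hrR, finrank_euclideanSpace_fin,
            ← ENNReal.ofReal_toReal measure_ball_lt_top.ne,
            ← ENNReal.ofReal_mul (sub_nonneg.2 (pow_le_pow_left₀ (le_max_right _ _) hrR d)),
            ← ENNReal.ofReal_mul hlam, ENNReal.ofReal_lt_one]
          linarith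
  refine eq_zero_of_le_mul_pow (K := #hfin₀.toFinset * ENNReal.ofReal (lam * δ ^ d))
    (mul_ne_top (natCast_ne_top _) ofReal_ne_top) hratio fun n => ?_
  calc P {ω | ∀ n, ω ∈ pathEvent Φ a b m n}
      ≤ P (gridPathEvent Φ δ hfin₀.toFinset hfin₁.toFinset n) := measure_mono fun ω hω =>
        pathEvent_subset_gridPathEvent hδ (fun u hu => hfin₀.mem_toFinset.2 hu)
          (fun u hu => hfin₁.mem_toFinset.2 hu) n (hω n)
    _ ≤ _ := hΦ.measure_gridPathEvent_le hlam hδ _ _ n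
    _ = _ := by rw [ENNReal.ofReal_pow (by positivity), pow_succ]; ring

end IsPoissonPP

theorem poisson_no_descending_chain_general (d : ℕ) (hd : 1 ≤ d) (lam : ℝ) (hlam : 0 < lam)
    {Ω : Type*} [MeasurableSpace Ω] (P : Measure Ω)
    (Φ : Ω → Set (EuclideanSpace ℝ (Fin d))) (hΦ : IsPoissonPP d lam P Φ) :
    P {ω | ∃ x : ℕ → EuclideanSpace ℝ (Fin d),
      (∀ i, x i ∈ Φ ω) ∧ Function.Injective x ∧
      ∀ i : ℕ, dist (x (i + 1)) (x (i + 2)) < dist (x i) (x (i + 1))} = 0 := by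
  have : NeZero d := ⟨by omega⟩
  set v := (volume (ball (0 : EuclideanSpace ℝ (Fin d)) 1)).toReal
  have hv : 0 < v := ENNReal.toReal_pos (measure_ball_pos _ _ one_pos).ne' measure_ball_lt_top.ne
  let good : Set (ℚ × ℚ × ℕ) :=
    {q | 0 ≤ q.1 ∧ q.1 ≤ q.2.1 ∧ lam * v * ((q.2.1 : ℝ) ^ d - (q.1 : ℝ) ^ d) < 1}
  refine measure_mono_null (fun ω hω => ?_) ((measure_biUnion_null_iff good.to_countable).2
    fun q hq => hΦ.measure_forall_pathEvent_eq_zero hlam.le (by exact_mod_cast hq.1)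
      (by exact_mod_cast hq.2.1) hq.2.2 q.2.2)
  obtain ⟨x, hxΦ, hx, hdesc⟩ := hω
  obtain ⟨c, hc, hpath⟩ := exists_forall_mem_pathEvent_of_dist_lt hxΦ hx hdesc
  obtain ⟨a, b, ha, hac, hcb, hab⟩ :=
    exists_rat_btwn_pow_sub_lt hc (one_div_pos.2 (mul_pos hlam hv)) d
  obtain ⟨m, hm⟩ := hpath a b hac hcb
  refine mem_biUnion (x := (a, b, m)) ⟨ha, by exact_mod_cast hac.trans hcb.le, ?_⟩ hm
  calc lam * v * ((b : ℝ) ^ d - (a : ℝ) ^ d) < lam * v * (1 / (lam * v)) := by gcongr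
    _ = 1 := by field_simp

/-- A homogeneous Poisson point process on `ℝ^d` almost surely contains no infinite
descending chain. -/
theorem poisson_no_descending_chain (d : ℕ) (hd : 1 ≤ d) (lam : ℝ) (hlam : 0 < lam)
    {Ω : Type*} [MeasurableSpace Ω] (P : Measure Ω) [IsProbabilityMeasure P]
    (Φ : Ω → Set (EuclideanSpace ℝ (Fin d))) (hΦ : IsPoissonPP d lam P Φ) :
    P {ω | ∃ x : ℕ → EuclideanSpace ℝ (Fin d),
      (∀ i, x i ∈ Φ ω) ∧ Function.Injective x ∧
      ∀ i : ℕ, dist (x (i + 1)) (x (i + 2)) < dist (x i) (x (i + 1))} = 0 :=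
  poisson_no_descending_chain_general d hd lam hlam P Φ hΦ
end

section
/- Let f: V → V be a function on a countable set V whose functional graph (edges {v, f(v)}) forms a forest in which every vertex has a finite set of iterated preimages (descendants), i.e., for every v, the set {u : f^k(u) = v for some k ≥ 0} is finite, and every forward orbit v, f(v), f²(v), ... consists of distinct vertices. Then every connected component of the functional graph is an infinite tree with exactly one end. -/
open SimpleGraph

/-- Universe-polymorphic version of `SimpleGraph.end_componentCompl_infinite`. -/
lemma aux_end_componentCompl_infinite {V : Type*} (G : SimpleGraph V) (e : G.end)
    (K : (Finset V)ᵒᵖ) :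
    ((e : (j : (Finset V)ᵒᵖ) → G.componentComplFunctor.obj j) K).supp.Infinite := by
  refine (e.val K).infinite_iff_in_all_ranges.mpr fun L h => ?_
  change Opposite.unop K ⊆ Opposite.unop (Opposite.op L) at h
  exact ⟨e.val (Opposite.op L), e.prop (CategoryTheory.opHomOfLE h)⟩

/-- Universe-polymorphic version of `SimpleGraph.nonempty_ends_of_infinite`. -/
lemma aux_ends_nonempty {V : Type*} (G : SimpleGraph V) [LocallyFinite G]
    [Fact G.Preconnected] [Infinite V] : G.end.Nonempty := by
  classical
  haveI : ∀ K : (Finset V)ᵒᵖ, Finite (G.componentComplFunctor.obj K) :=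
    fun K => G.componentCompl_finite K.unop
  haveI : ∀ K : (Finset V)ᵒᵖ, Nonempty (G.componentComplFunctor.obj K) :=
    fun K => G.componentCompl_nonempty_of_infinite K.unop
  exact nonempty_sections_of_finite_inverse_system G.componentComplFunctor

/-- A walk whose support lies in `s` gives reachability in the induced graph. -/
lemma aux_reachable_induce {V : Type*} {G : SimpleGraph V} {s : Set V} {a b : V}
    (p : G.Walk a b) (hp : ∀ w ∈ p.support, w ∈ s) :
    ∀ (ha : a ∈ s) (hb : b ∈ s), (G.induce s).Reachable ⟨a, ha⟩ ⟨b, hb⟩ := by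
  induction p with
  | nil => intro ha hb; exact Reachable.refl _
  | @cons u c b h q ih =>
    intro ha hb
    have hc : c ∈ s := hp c (by simp)
    have hadj : (G.induce s).Adj ⟨u, ha⟩ ⟨c, hc⟩ := by
      simpa using h
    exact hadj.reachable.trans (ih (fun w hw => hp w (by simp [hw])) hc hb)

/-- Let `f : V → V` on a countable set, whose functional graph (edges `{v, f v}`) is a
forest in which every vertex has finitely many descendants and every forward orbit is
injective (no periodic points). Then every connected component of the functional graph is
an infinite tree with exactly one end. -/
theorem functional_forest_components_one_ended {V : Type*} [Countable V] (f : V → V)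
    (G : SimpleGraph V) (hG : G = SimpleGraph.fromRel (fun u v => f u = v))
    (hforest : G.IsAcyclic)
    (hdesc : ∀ v : V, {u : V | ∃ k : ℕ, f^[k] u = v}.Finite)
    (horbit : ∀ v : V, Function.Injective (fun k : ℕ => f^[k] v)) :
    ∀ v : V,
      Infinite (G.connectedComponentMk v).supp ∧
      (G.induce (G.connectedComponentMk v).supp).IsTree ∧
      Nat.card (G.induce (G.connectedComponentMk v).supp).end = 1 := by
  classical
  -- adjacency characterization
  have hadj : ∀ u w : V, G.Adj u w ↔ u ≠ w ∧ (f u = w ∨ f w = u) := by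
    subst hG; intro u w; exact SimpleGraph.fromRel_adj _ u w
  have hne : ∀ (u : V) {k m : ℕ}, k ≠ m → f^[k] u ≠ f^[m] u :=
    fun u k m hkm he => hkm (horbit u he)
  have hadjstep : ∀ (u : V) (j : ℕ), G.Adj (f^[j] u) (f^[j + 1] u) := fun u j =>
    (hadj _ _).2 ⟨hne u (by omega), Or.inl (Function.iterate_succ_apply' f j u).symm⟩
  have hreach_orbit : ∀ (u : V) (k : ℕ), G.Reachable u (f^[k] u) := by
    intro u k
    induction k with
    | zero => exact Reachable.refl u
    | succ n ih => exact ih.trans (hadjstep u n).reachable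
  -- orbits of reachable vertices merge
  have hmerge : ∀ u w : V, G.Reachable u w → ∃ k m : ℕ, f^[k] u = f^[m] w := by
    intro u w h
    obtain ⟨p⟩ := h
    induction p with
    | nil => exact ⟨0, 0, rfl⟩
    | @cons u c w h q ih =>
      obtain ⟨k, m, hkm⟩ := ih
      rcases (hadj _ _).1 h with ⟨-, h1 | h1⟩
      · exact ⟨k + 1, m, by rw [Function.iterate_succ_apply, h1, hkm]⟩
      · refine ⟨k, m + 1, ?_⟩
        rw [← h1, ← Function.iterate_succ_apply, Function.iterate_succ_apply', hkm]
        exact (Function.iterate_succ_apply' f m w).symm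
  intro v
  set C := G.connectedComponentMk v with hC
  set s : Set V := C.supp with hs
  have hmem : ∀ u : V, u ∈ s ↔ G.Reachable u v := by
    intro u
    rw [hs, hC, ConnectedComponent.mem_supp_iff, ConnectedComponent.eq]
  have hmem_orbit : ∀ (u : V), u ∈ s → ∀ j : ℕ, f^[j] u ∈ s := by
    intro u hu j
    exact (hmem _).2 (((hreach_orbit u j).symm).trans ((hmem u).1 hu))
  have hv_mem : v ∈ s := (hmem v).2 (Reachable.refl v)
  -- Infinite
  have hinf : Infinite s := by
    refine Infinite.of_injective (fun k : ℕ => (⟨f^[k] v, hmem_orbit v hv_mem k⟩ : s)) ?_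
    intro k m hkm
    exact horbit v (congrArg Subtype.val hkm)
  -- Connectedness of induced component
  have hconn : (G.induce s).Connected := by
    haveI : Nonempty s := ⟨⟨v, hv_mem⟩⟩
    refine ⟨fun x y => ?_⟩
    obtain ⟨a, ha⟩ := x
    obtain ⟨b, hb⟩ := y
    obtain ⟨p⟩ := ((hmem a).1 ha).trans ((hmem b).1 hb).symm
    refine aux_reachable_induce p (fun w hw => ?_) ha hb
    exact (hmem w).2 ((p.takeUntil w hw).reachable.symm.trans ((hmem a).1 ha))
  have htree : (G.induce s).IsTree := by
    refine ⟨hconn, ?_⟩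
    intro a p hp
    have := hp.map (f := (SimpleGraph.Embedding.induce s).toHom) Subtype.val_injective
    exact hforest _ this
  refine ⟨hinf, htree, ?_⟩
  -- locally finite
  haveI : LocallyFinite (G.induce s) := by
    intro a
    have hNfin : {w : V | G.Adj (↑a) w}.Finite := by
      refine Set.Finite.subset (Set.Finite.union (Set.finite_singleton (f ↑a))
        (hdesc (↑a : V))) ?_
      rintro w hw
      rcases (hadj _ _).1 hw with ⟨-, h1 | h1⟩
      · exact Or.inl h1.symm
      · exact Or.inr ⟨1, by simpa using h1⟩
    have : ((G.induce s).neighborSet a).Finite := by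
      refine Set.Finite.subset (hNfin.preimage Subtype.val_injective.injOn) ?_
      intro b hb
      simpa using hb
    exact this.fintype
  haveI : Fact (G.induce s).Preconnected := ⟨hconn.preconnected⟩
  rw [Nat.card_eq_one_iff_unique]
  constructor
  · -- subsingleton of ends
    constructor
    rintro ⟨σ, hσ⟩ ⟨τ, hτ⟩
    apply Subtype.ext
    funext K
    -- the finite set of descendants of K
    set T : Set V := ⋃ x ∈ K.unop, {u : V | ∃ k : ℕ, f^[k] u = (x : V)} with hT
    have hTfin : T.Finite := Set.Finite.biUnion K.unop.finite_toSet fun x _ => hdesc (↑x : V)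
    have hTmem : ∀ u : V, u ∈ T ↔ ∃ x ∈ K.unop, ∃ k : ℕ, f^[k] u = (x : V) := by
      intro u; simp [hT]
    -- vertices outside T have their whole forward orbit outside T and outside K
    have horbT : ∀ (u : V), u ∉ T → ∀ j : ℕ, f^[j] u ∉ T := by
      intro u hu j hj
      obtain ⟨x, hx, k, hk⟩ := (hTmem _).1 hj
      exact hu ((hTmem u).2 ⟨x, hx, k + j, by rw [Function.iterate_add_apply, hk]⟩)
    have hnotK : ∀ (u : V) (hu : u ∈ s), u ∉ T → (⟨u, hu⟩ : s) ∉ K.unop := by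
      intro u hu huT hK
      exact huT ((hTmem u).2 ⟨⟨u, hu⟩, hK, 0, rfl⟩)
    -- reachability along the orbit in the complement of K
    have horbreach : ∀ (u : V) (hu : u ∈ s) (huT : u ∉ T) (j : ℕ),
        ((G.induce s).induce ((K.unop : Set s) : Set s)ᶜ).Reachable
          ⟨⟨u, hu⟩, hnotK u hu huT⟩
          ⟨⟨f^[j] u, hmem_orbit u hu j⟩, hnotK _ _ (horbT u huT j)⟩ := by
      intro u hu huT j
      induction j with
      | zero => exact Reachable.refl _
      | succ n ih =>
        refine ih.trans (Adj.reachable ?_)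
        show ((G.induce s).induce _).Adj
          ⟨⟨f^[n] u, _⟩, _⟩ ⟨⟨f^[n + 1] u, _⟩, _⟩
        simp only [comap_adj, Function.Embedding.coe_subtype]
        exact hadjstep u n
    -- pick vertices outside T in both end components
    have hσinf := aux_end_componentCompl_infinite (G.induce s) ⟨σ, hσ⟩ K
    have hτinf := aux_end_componentCompl_infinite (G.induce s) ⟨τ, hτ⟩ K
    have hTfin' : {a : s | (a : V) ∈ T}.Finite := hTfin.preimage Subtype.val_injective.injOn
    obtain ⟨a, haσ, haT⟩ := (hσinf.diff hTfin').nonempty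
    obtain ⟨b, hbτ, hbT⟩ := (hτinf.diff hTfin').nonempty
    have haT : (a : V) ∉ T := haT
    have hbT : (b : V) ∉ T := hbT
    obtain ⟨haK, hamk⟩ := (ComponentCompl.mem_supp_iff).1 haσ
    obtain ⟨hbK, hbmk⟩ := (ComponentCompl.mem_supp_iff).1 hbτ
    -- merge the orbits of a and b
    obtain ⟨k, m, hkm⟩ := hmerge (↑a) (↑b) (((hmem _).1 a.2).trans ((hmem _).1 b.2).symm)
    have hreach : ((G.induce s).induce ((K.unop : Set s) : Set s)ᶜ).Reachable
        ⟨a, haK⟩ ⟨b, hbK⟩ := by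
      have h1 := horbreach (↑a) a.2 haT k
      have h2 := horbreach (↑b) b.2 hbT m
      have heq : (⟨⟨f^[k] (↑a : V), hmem_orbit _ a.2 k⟩, hnotK _ _ (horbT _ haT k)⟩ :
          ↥((K.unop : Set s)ᶜ)) = ⟨⟨f^[m] (↑b : V), hmem_orbit _ b.2 m⟩,
            hnotK _ _ (horbT _ hbT m)⟩ := by
        apply Subtype.ext; apply Subtype.ext; exact hkm
      have h1' : ((G.induce s).induce ((K.unop : Set s) : Set s)ᶜ).Reachable
          ⟨a, haK⟩ ⟨⟨f^[m] (↑b : V), hmem_orbit _ b.2 m⟩, hnotK _ _ (horbT _ hbT m)⟩ := by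
        rw [← heq]
        convert h1 using 2
      refine h1'.trans ?_
      have h2' := h2.symm
      convert h2' using 2
    have hamk' : (G.induce s).componentComplMk haK = σ K := hamk
    have hbmk' : (G.induce s).componentComplMk hbK = τ K := hbmk
    show σ K = τ K
    rw [← hamk', ← hbmk']
    exact ConnectedComponent.sound hreach
  · -- nonempty
    obtain ⟨e, he⟩ := aux_ends_nonempty (G.induce s)
    exact ⟨⟨e, he⟩⟩
end
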